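/- Let h, m, n, k ∈ ℕ, let 𝒜 = {p_1, ..., p_k} be a set of integral polynomials, and let a_1 be a nonzero integer. Then there exists N ∈ ℕ such that for every (m,n)-type colouring Δ of {1,...,N}, at least one of the following holds: (i) there exist a ∈ ℤ and d ≠ 0 such that {a, a+p_1(d), ..., a+p_k(d)} ⊆ {1,...,N} and this set is monochromatic with respect to Δ; or (ii) there exist a' ∈ ℤ and d' > h such that {a', a' + a_1·d'} ⊆ {1,...,N} and this two-element set is fully-rainbow with respect to Δ. -/

import Mathlib

/-
Polynomial van der Waerden theorem in Walters' combinatorial form, by PET induction. For a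
finite family `G` of integer polynomials vanishing at `0` and `p ∈ G` of least degree,
monochromatic `G`-configurations are obtained by colour focusing from monochromatic
configurations of the families `{f - p} ∪ {f (· + D) - f D - p : 1 ≤ D ≤ M}`, applied to the
colouring of each point by the colours of the block of length `M` following it. Replacing `f` by `f - p` keeps the
(degree, leading coefficient) class of every member of degree at least `deg p` except the class
of `p`, which drops below `deg p`; so the multiset of degrees of the classes decreases in the
Dershowitz–Manna order.

For the theorem, let `M₀ = a₁ (h + 1)` and suppose there is no fully-rainbow pair. Then two
distinct points of `[1, N]` with the same last colour that are congruent modulo `M₀` share a value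
among their first `m` coordinates. Colour `x` by its last colour and by the pattern of
coincidences between its coordinates and those of a fixed reference point of its class. In a
monochromatic configuration `{a, a + M₀ e, a + pᵢ (M₀ e)}` all points have the same pattern, which
is nonempty since `a` or `a + M₀ e` differs from the reference point; any coincidence `(j, j')` in
it makes coordinate `j` constant on the configuration.
-/

open Polynomial

namespace Polynomial

variable {R : Type*}

def degreeClass [Semiring R] (f : R[X]) : ℕ × R := (f.natDegree, f.leadingCoeff)

section Ring

variable [Ring R] {p q : R[X]}

theorem natDegree_sub_lt_of_degreeClass_eq (hp : 0 < p.natDegree)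
    (h : degreeClass q = degreeClass p) : (q - p).natDegree < p.natDegree := by
  simp only [degreeClass, Prod.mk.injEq] at h
  obtain ⟨hdeg, hlc⟩ := h
  by_cases hqp : q - p = 0
  · rwa [hqp, natDegree_zero]
  have hq : q ≠ 0 := ne_zero_of_natDegree_gt (hdeg ▸ hp)
  have hp0 : p ≠ 0 := ne_zero_of_natDegree_gt hp
  rw [natDegree_lt_iff_degree_lt hqp, ← degree_eq_natDegree hp0]
  have hd : q.degree = p.degree := by rw [degree_eq_natDegree hq, degree_eq_natDegree hp0, hdeg]
  exact hd ▸ degree_sub_lt_left hd hq hlc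

theorem degreeClass_sub_of_ne (hp : 0 < p.natDegree) (hle : p.natDegree ≤ q.natDegree)
    (hne : degreeClass q ≠ degreeClass p) :
    degreeClass (q - p) = (q.natDegree,
      if q.natDegree = p.natDegree then q.leadingCoeff - p.leadingCoeff else q.leadingCoeff) := by
  rcases hle.lt_or_eq with hlt | heq
  · simp only [degreeClass, natDegree_sub_eq_left_of_natDegree_lt hlt, hlt.ne',
      leadingCoeff_sub_of_degree_lt (degree_lt_degree hlt), if_false]
  · have hlc : q.leadingCoeff ≠ p.leadingCoeff := fun h => hne (by simp [degreeClass, heq, h])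
    have hd : q.degree = p.degree := by
      rw [degree_eq_natDegree (ne_zero_of_natDegree_gt hp),
        degree_eq_natDegree (ne_zero_of_natDegree_gt (heq ▸ hp)), heq]
    have hcoeff : (q - p).coeff q.natDegree = q.leadingCoeff - p.leadingCoeff := by
      rw [coeff_sub, coeff_natDegree, ← heq, coeff_natDegree]
    have hdeg : (q - p).natDegree = q.natDegree :=
      le_antisymm ((natDegree_sub_le _ _).trans (max_le le_rfl hle))
        (le_natDegree_of_ne_zero (hcoeff ▸ sub_ne_zero.2 hlc))
    simp only [degreeClass, hdeg, heq, if_true, leadingCoeff_sub_of_degree_eq hd hlc]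

end Ring

variable [CommRing R]

noncomputable def shift (D : R) (f : R[X]) : R[X] := taylor D f - C (f.eval D)

@[simp]
theorem eval_shift (D x : R) (f : R[X]) : (shift D f).eval x = f.eval (x + D) - f.eval D := by
  simp [shift, taylor_eval]

theorem degreeClass_shift {f : R[X]} (hf : 0 < f.natDegree) (D : R) :
    degreeClass (shift D f) = degreeClass f := by
  have hC : (C (f.eval D)).degree < (taylor D f).degree := by
    refine degree_C_le.trans_lt ?_
    rw [degree_eq_natDegree (ne_zero_of_natDegree_gt ((natDegree_taylor f D).symm ▸ hf)),
      natDegree_taylor]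
    exact_mod_cast hf
  simp only [degreeClass, shift, natDegree_sub_C, natDegree_taylor,
    leadingCoeff_sub_of_degree_lt hC, leadingCoeff_taylor]

end Polynomial

namespace Multiset

theorem isDershowitzMannaLT_of_filter_le_erase {α : Type*} [LinearOrder α] {M N : Multiset α}
    {e : α} (he : e ∈ N) (h : M.filter (e ≤ ·) ≤ N.erase e) : IsDershowitzMannaLT M N := by
  have hle : M.filter (e ≤ ·) ≤ N := h.trans (erase_le e N)
  have hmem : e ∈ N - M.filter (e ≤ ·) := by
    rw [mem_sub]
    refine (count_le_of_le e h).trans_lt ?_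
    rw [count_erase_self]
    exact Nat.sub_lt (count_pos.2 he) one_pos
  refine ⟨M.filter (e ≤ ·), M.filter (¬ e ≤ ·), N - M.filter (e ≤ ·), ?_,
    (filter_add_not _ M).symm, (add_tsub_cancel_of_le hle).symm, fun y hy => ⟨e, hmem, ?_⟩⟩
  · exact fun h0 => by simp [empty_eq_zero ▸ h0] at hmem
  · exact not_le.1 (mem_filter.1 hy).2

end Multiset

noncomputable def petFamily (G : Finset ℤ[X]) (p : ℤ[X]) (M : ℤ) : Finset ℤ[X] :=
  G.image (· - p) ∪ (Finset.Icc 1 M ×ˢ G).image fun x => shift x.1 x.2 - p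

theorem mem_petFamily {G : Finset ℤ[X]} {p h : ℤ[X]} {M : ℤ} :
    h ∈ petFamily G p M ↔ ∃ f ∈ G, h = f - p ∨ ∃ D ∈ Set.Icc 1 M, h = shift D f - p := by
  simp only [petFamily, Finset.mem_union, Finset.mem_image, Finset.mem_product, Finset.mem_Icc,
    Set.mem_Icc, Prod.exists]
  aesop

theorem eval_zero_of_mem_petFamily {G : Finset ℤ[X]} {p h : ℤ[X]} {M : ℤ}
    (hG : ∀ f ∈ G, f.eval 0 = 0) (hp : p.eval 0 = 0) (hh : h ∈ petFamily G p M) :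
    h.eval 0 = 0 := by
  obtain ⟨f, hf, rfl | ⟨D, -, rfl⟩⟩ := mem_petFamily.1 hh <;> simp [hG f hf, hp]

noncomputable def degreeClasses (G : Finset ℤ[X]) : Finset (ℕ × ℤ) :=
  (G.erase 0).image degreeClass

noncomputable def petWeight (G : Finset ℤ[X]) : Multiset ℕ :=
  (degreeClasses G).val.map Prod.fst

theorem petWeight_erase_zero (G : Finset ℤ[X]) : petWeight (G.erase 0) = petWeight G := by
  rw [petWeight, petWeight, degreeClasses, degreeClasses, Finset.erase_idem]

theorem petWeight_petFamily_lt {G : Finset ℤ[X]} {p : ℤ[X]} (hG : ∀ f ∈ G, 0 < f.natDegree)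
    (hp : p ∈ G) (hmin : ∀ f ∈ G, p.natDegree ≤ f.natDegree) (M : ℤ) :
    Multiset.IsDershowitzMannaLT (petWeight (petFamily G p M)) (petWeight G) := by
  set e := p.natDegree
  set ψ : ℕ × ℤ → ℕ × ℤ := fun c => (c.1, if c.1 = e then c.2 - p.leadingCoeff else c.2)
  have hsub : (degreeClasses (petFamily G p M)).filter (e ≤ ·.1) ⊆
      ((degreeClasses G).erase (degreeClass p)).image ψ := by
    intro c hc
    simp only [degreeClasses, Finset.mem_filter, Finset.mem_image, Finset.mem_erase] at hc ⊢
    obtain ⟨⟨h, ⟨hh0, hh⟩, rfl⟩, hhe⟩ := hc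
    obtain ⟨f, hf, q, hq, rfl⟩ : ∃ f ∈ G, ∃ q, degreeClass q = degreeClass f ∧ h = q - p := by
      obtain ⟨f, hf, rfl | ⟨D, -, rfl⟩⟩ := mem_petFamily.1 hh
      · exact ⟨f, hf, f, rfl, rfl⟩
      · exact ⟨f, hf, _, degreeClass_shift (hG f hf) D, rfl⟩
    have hqdeg : q.natDegree = f.natDegree := congrArg Prod.fst hq
    have hne : degreeClass q ≠ degreeClass p := fun hqp =>
      absurd hhe (not_le.2 (natDegree_sub_lt_of_degreeClass_eq (hG p hp) hqp))
    refine ⟨degreeClass f, ⟨hq ▸ hne, f, ⟨ne_zero_of_natDegree_gt (hG f hf), hf⟩, rfl⟩, ?_⟩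
    rw [degreeClass_sub_of_ne (hG p hp) (hqdeg ▸ hmin f hf) hne, ← hq]
    rfl
  have hp' : degreeClass p ∈ (degreeClasses G).val :=
    Finset.mem_image_of_mem _ (Finset.mem_erase.2 ⟨ne_zero_of_natDegree_gt (hG p hp), hp⟩)
  refine Multiset.isDershowitzMannaLT_of_filter_le_erase (Multiset.mem_map_of_mem Prod.fst hp') ?_
  calc (petWeight (petFamily G p M)).filter (e ≤ ·)
      = ((degreeClasses (petFamily G p M)).filter (e ≤ ·.1)).val.map Prod.fst := by
        simp only [petWeight, Multiset.filter_map, Finset.filter_val]; rfl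
    _ ≤ (((degreeClasses G).erase (degreeClass p)).image ψ).val.map Prod.fst :=
        Multiset.map_le_map (Finset.val_le_iff.2 hsub)
    _ ≤ (((degreeClasses G).erase (degreeClass p)).val.map ψ).map Prod.fst :=
        Multiset.map_le_map (Multiset.dedup_le _)
    _ = (petWeight G).erase e := by
        rw [Multiset.map_map, Finset.erase_val, petWeight, Multiset.map_erase_of_mem _ _ hp']
        rfl

section Configurations

variable {κ : Type*} {G : Finset ℤ[X]} {χ : ℤ → κ}

def IsColouredConfig (G : Finset ℤ[X]) (χ : ℤ → κ) (N a d : ℤ) (c : κ) : Prop :=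
  d ∈ Set.Icc 1 N ∧ ∀ f ∈ G, a + f.eval d ∈ Set.Icc 1 N ∧ χ (a + f.eval d) = c

def IsMonoConfig (G : Finset ℤ[X]) (χ : ℤ → κ) (N a d : ℤ) : Prop :=
  a ∈ Set.Icc 1 N ∧ IsColouredConfig G χ N a d (χ a)

def HasPolyVdW (G : Finset ℤ[X]) : Prop :=
  ∀ (κ : Type) [Finite κ], ∃ N : ℕ, ∀ χ : ℤ → κ, ∃ a d, IsMonoConfig G χ N a d

def IsColourFocused (G : Finset ℤ[X]) (χ : ℤ → κ) (N : ℤ) (s : ℕ) : Prop :=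
  ∃ a ∈ Set.Icc 1 N, ∃ (D : Fin s → ℤ) (c : Fin s → κ),
    Function.Injective c ∧ ∀ t, IsColouredConfig G χ N a (D t) (c t)

theorem IsMonoConfig.translate {N N' T a d : ℤ} (h : IsMonoConfig G (fun z => χ (T + z)) N a d)
    (hT : 0 ≤ T) (hN : T + N ≤ N') : IsMonoConfig G χ N' (T + a) d := by
  obtain ⟨ha, hd, hG⟩ := h
  refine ⟨by simp only [Set.mem_Icc] at ha ⊢; omega, by simp only [Set.mem_Icc] at hd ⊢; omega,
    fun f hf => ?_⟩
  obtain ⟨hmem, hcol⟩ := hG f hf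
  rw [Set.mem_Icc] at hmem
  exact ⟨by rw [Set.mem_Icc]; omega, by rwa [add_assoc]⟩

theorem HasPolyVdW.of_erase_zero (h : HasPolyVdW (G.erase 0)) : HasPolyVdW G := by
  intro κ _
  obtain ⟨N, hN⟩ := h κ
  refine ⟨N, fun χ => ?_⟩
  obtain ⟨a, d, ha, hd, hG⟩ := hN χ
  refine ⟨a, d, ha, hd, fun f hf => ?_⟩
  by_cases hf0 : f = 0
  · simp [hf0, ha]
  · exact hG f (Finset.mem_erase.2 ⟨hf0, hf⟩)

theorem hasPolyVdW_empty : HasPolyVdW (∅ : Finset ℤ[X]) :=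
  fun _ _ => ⟨1, fun _ => ⟨1, 1, by simp, by simp, by simp⟩⟩

theorem isColourFocused_succ {p : ℤ[X]} {s : ℕ} {K Nb M b e a : ℤ} {D : Fin s → ℤ}
    {c : Fin s → κ} (hK : |p.eval e| ≤ K) (he : e ∈ Set.Icc 1 Nb) (hb : b ∈ Set.Icc 1 Nb)
    (htr : ∀ h ∈ petFamily G p M, b + h.eval e ∈ Set.Icc 1 Nb ∧
      ∀ x ∈ Set.Icc 1 M, χ (K + (b + h.eval e + x)) = χ (K + (b + x)))
    (ha : a ∈ Set.Icc 1 M) (hc : Function.Injective c) (hnew : χ (K + b + a) ∉ Set.range c)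
    (hD : ∀ t, IsColouredConfig G (fun z => χ (K + b + z)) M a (D t) (c t)) :
    IsColourFocused G χ (2 * K + Nb + M) (s + 1) := by
  simp only [Set.mem_Icc, abs_le] at hK he hb ha
  have hpt : ∀ h ∈ petFamily G p M, ∀ x ∈ Set.Icc 1 M,
      K + (b + h.eval e + x) ∈ Set.Icc 1 (2 * K + Nb + M) ∧
        χ (K + (b + h.eval e + x)) = χ (K + b + x) := by
    intro h hh x hx
    have := (htr h hh).1
    simp only [Set.mem_Icc] at this hx ⊢
    exact ⟨by omega, add_assoc (K : ℤ) b x ▸ (htr h hh).2 x (Set.mem_Icc.2 hx)⟩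
  -- New focus `K + b + a - p e`: the new configuration is a translate by `f - p`, and the old
  -- ones, moved by `e`, are translates by `shift (D t) f - p`.
  refine ⟨K + b + a - p.eval e, by rw [Set.mem_Icc]; omega, Fin.cons e fun t => D t + e,
    Fin.cons (χ (K + b + a)) c, Fin.cons_injective_iff.2 ⟨hnew, hc⟩, Fin.cases ?_ fun t => ?_⟩
  · refine ⟨by rw [Fin.cons_zero, Set.mem_Icc]; omega, fun f hf => ?_⟩
    have hfp : f - p ∈ petFamily G p M := mem_petFamily.2 ⟨f, hf, .inl rfl⟩
    have hrw : K + b + a - p.eval e + f.eval e = K + (b + (f - p).eval e + a) := by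
      rw [eval_sub]; ring
    simpa only [Fin.cons_zero, hrw] using hpt _ hfp a (Set.mem_Icc.2 ha)
  · obtain ⟨hDt, hfDt⟩ := hD t
    rw [Set.mem_Icc] at hDt
    refine ⟨by rw [Fin.cons_succ, Set.mem_Icc]; omega, fun f hf => ?_⟩
    have hfp : shift (D t) f - p ∈ petFamily G p M :=
      mem_petFamily.2 ⟨f, hf, .inr ⟨D t, Set.mem_Icc.2 hDt, rfl⟩⟩
    have hrw : K + b + a - p.eval e + f.eval (D t + e) =
        K + (b + (shift (D t) f - p).eval e + (a + f.eval (D t))) := by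
      rw [eval_sub, eval_shift, add_comm e]; ring
    obtain ⟨hmem, hcol⟩ := hfDt f hf
    simp only [Fin.cons_succ]
    rw [hrw, ← hcol]
    exact hpt _ hfp _ hmem

end Configurations

section ColourFocusing

variable {G : Finset ℤ[X]}

/-- Apply `hG` to the colouring of `y` by the colours of `y + 1, …, y + B`. -/
theorem HasPolyVdW.exists_block_translates (hG : HasPolyVdW G) (κ : Type) [Finite κ] (B : ℕ) :
    ∃ N : ℕ, ∀ χ : ℤ → κ, ∃ b e : ℤ, b ∈ Set.Icc 1 (N : ℤ) ∧ e ∈ Set.Icc 1 (N : ℤ) ∧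
      ∀ f ∈ G, b + f.eval e ∈ Set.Icc 1 (N : ℤ) ∧
        ∀ x ∈ Set.Icc 1 (B : ℤ), χ (b + f.eval e + x) = χ (b + x) := by
  obtain ⟨N, hN⟩ := hG (Fin B → κ)
  refine ⟨N, fun χ => ?_⟩
  obtain ⟨b, e, hb, he, hcfg⟩ := hN fun y u => χ (y + u + 1)
  refine ⟨b, e, hb, he, fun f hf => ⟨(hcfg f hf).1, fun x hx => ?_⟩⟩
  rw [Set.mem_Icc] at hx
  have hblock := congrFun (hcfg f hf).2 ⟨(x - 1).toNat, by omega⟩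
  have hx' : (((x - 1).toNat : ℕ) : ℤ) = x - 1 := Int.toNat_of_nonneg (by omega)
  simp only [hx'] at hblock
  convert hblock using 2 <;> ring

theorem exists_mono_or_colourFocused_succ {κ : Type} [Finite κ] {p : ℤ[X]} {s M : ℕ}
    (hH : HasPolyVdW (petFamily G p M))
    (hM : ∀ χ : ℤ → κ, (∃ a d, IsMonoConfig G χ M a d) ∨ IsColourFocused G χ M s) :
    ∃ M' : ℕ, ∀ χ : ℤ → κ,
      (∃ a d, IsMonoConfig G χ M' a d) ∨ IsColourFocused G χ M' (s + 1) := by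
  obtain ⟨Nb, hNb⟩ := hH.exists_block_translates κ M
  obtain ⟨K, hK⟩ : ∃ K : ℕ, ∀ x ∈ Set.Icc (1 : ℤ) Nb, |p.eval x| ≤ K := by
    obtain ⟨K, hK⟩ := ((Set.finite_Icc (1 : ℤ) Nb).image fun x => (p.eval x).natAbs).bddAbove
    exact ⟨K, fun x hx => Int.abs_eq_natAbs (p.eval x) ▸ Int.ofNat_le.2 (hK ⟨x, hx, rfl⟩)⟩
  refine ⟨2 * K + Nb + M, fun χ => ?_⟩
  obtain ⟨b, e, hb, he, htr⟩ := hNb fun z => χ (K + z)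
  have hT : 0 ≤ (K : ℤ) + b := by rw [Set.mem_Icc] at hb; omega
  have hTM : (K : ℤ) + b + M ≤ ((2 * K + Nb + M : ℕ) : ℤ) := by rw [Set.mem_Icc] at hb; omega
  rcases hM fun z => χ (K + b + z) with ⟨a, d, hmono⟩ | ⟨a, ha, D, c, hc, hD⟩
  · exact .inl ⟨_, _, hmono.translate hT hTM⟩
  by_cases hnew : χ (K + b + a) ∈ Set.range c
  · obtain ⟨t, ht⟩ := hnew
    exact .inl ⟨_, _, IsMonoConfig.translate ⟨ha, ht ▸ hD t⟩ hT hTM⟩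
  · push_cast
    exact .inr (isColourFocused_succ (hK e he) he hb htr ha hc hnew hD)

theorem HasPolyVdW.of_petFamily (p : ℤ[X]) (h : ∀ M : ℤ, HasPolyVdW (petFamily G p M)) :
    HasPolyVdW G := by
  intro κ _
  have hfocus : ∀ s : ℕ, ∃ M : ℕ, ∀ χ : ℤ → κ,
      (∃ a d, IsMonoConfig G χ M a d) ∨ IsColourFocused G χ M s := by
    intro s
    induction s with
    | zero => exact ⟨1, fun χ => .inr ⟨1, by simp, Fin.elim0, Fin.elim0, fun t => t.elim0,
        fun t => t.elim0⟩⟩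
    | succ s ih =>
      obtain ⟨M, hM⟩ := ih
      exact exists_mono_or_colourFocused_succ (h M) hM
  obtain ⟨M, hM⟩ := hfocus (Nat.card κ)
  refine ⟨M, fun χ => (hM χ).elim id fun ⟨a, ha, D, c, hc, hD⟩ => ?_⟩
  obtain ⟨t, ht⟩ := (hc.bijective_of_nat_card_le (by simp)).2 (χ a)
  exact ⟨a, D t, ha, ht ▸ hD t⟩

end ColourFocusing

theorem hasPolyVdW_of_forall_eval_zero (G : Finset ℤ[X]) (hG : ∀ f ∈ G, f.eval 0 = 0) :
    HasPolyVdW G := by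
  induction hw : petWeight G using (Multiset.wellFounded_isDershowitzMannaLT (α := ℕ)).induction
    generalizing G with
  | _ w ih =>
    subst hw
    apply HasPolyVdW.of_erase_zero
    have hpos : ∀ f ∈ G.erase 0, 0 < f.natDegree := fun f hf =>
      natDegree_pos_of_eval₂_root (Finset.ne_of_mem_erase hf) (RingHom.id ℤ)
        (hG f (Finset.mem_of_mem_erase hf)) fun _ => id
    rcases (G.erase 0).eq_empty_or_nonempty with h0 | hne
    · rw [h0]; exact hasPolyVdW_empty
    obtain ⟨p, hp, hmin⟩ := (G.erase 0).exists_min_image natDegree hne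
    refine HasPolyVdW.of_petFamily p fun M => ih _ ?_ _ (fun h hh =>
      eval_zero_of_mem_petFamily (fun f hf => hG f (Finset.mem_of_mem_erase hf))
        (hG p (Finset.mem_of_mem_erase hp)) hh) rfl
    rw [← petWeight_erase_zero G]
    exact petWeight_petFamily_lt hpos hp hmin M

def IsFullyRainbow {m n : ℕ} (Δ : ℤ → (Fin m → ℕ) × Fin n) (x y : ℤ) : Prop :=
  y ≠ x ∧ (∀ j j' : Fin m, (Δ y).1 j ≠ (Δ x).1 j') ∧ (Δ y).2 = (Δ x).2

theorem exists_shared_coord_of_not_rainbow {m n h : ℕ} {Δ : ℤ → (Fin m → ℕ) × Fin n}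
    {a₁ N x y : ℤ}
    (hii : ¬ ∃ a' d' : ℤ, (h : ℤ) < d' ∧ a' ∈ Set.Icc 1 N ∧ a' + a₁ * d' ∈ Set.Icc 1 N ∧
      IsFullyRainbow Δ a' (a' + a₁ * d'))
    (hx : x ∈ Set.Icc 1 N) (hy : y ∈ Set.Icc 1 N) (hxy : x ≠ y) (hdvd : a₁ * (h + 1) ∣ y - x)
    (hc : (Δ x).2 = (Δ y).2) : ∃ j j', (Δ x).1 j = (Δ y).1 j' := by
  obtain ⟨w, hw⟩ := hdvd
  wlog hw0 : 0 < w generalizing x y w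
  · have hw0' : w ≠ 0 := by rintro rfl; exact hxy (by linarith)
    obtain ⟨j, j', hj⟩ := this hy hx hxy.symm hc.symm (-w) (by linarith) (by omega)
    exact ⟨j', j, hj.symm⟩
  by_contra! hno
  have hxy' : x + a₁ * ((h + 1) * w) = y := by linarith
  refine hii ⟨x, (h + 1) * w, by nlinarith, hx, ?_⟩
  rw [hxy']
  exact ⟨hy, hxy.symm, fun j j' hj => hno j' j hj.symm, hc.symm⟩

section ReferencePoint

variable {m n : ℕ} (Δ : ℤ → (Fin m → ℕ) × Fin n) (M₀ N : ℤ)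

noncomputable def refPoint (x : ℤ) : ℤ :=
  Function.invFunOn (fun y => ((Δ y).2, y % M₀)) (Set.Icc 1 N) ((Δ x).2, x % M₀)

theorem refPoint_spec {x : ℤ} (hx : x ∈ Set.Icc 1 N) :
    refPoint Δ M₀ N x ∈ Set.Icc 1 N ∧ (Δ (refPoint Δ M₀ N x)).2 = (Δ x).2 ∧
      M₀ ∣ refPoint Δ M₀ N x - x := by
  obtain ⟨hmem, hkey⟩ := Function.invFunOn_pos (f := fun y => ((Δ y).2, y % M₀)) ⟨x, hx, rfl⟩
  exact ⟨hmem, congrArg Prod.fst hkey, Int.modEq_iff_dvd.1 (congrArg Prod.snd hkey).symm⟩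

theorem refPoint_eq_of_dvd {x y : ℤ} (hc : (Δ x).2 = (Δ y).2) (hdvd : M₀ ∣ y - x) :
    refPoint Δ M₀ N x = refPoint Δ M₀ N y := by
  rw [refPoint, refPoint, hc, (Int.modEq_iff_dvd.2 hdvd).eq]

def coincidenceColouring (x : ℤ) : Fin n × (Fin m → Fin m → Prop) :=
  ((Δ x).2, fun j j' => (Δ x).1 j = (Δ (refPoint Δ M₀ N x)).1 j')

end ReferencePoint

theorem exists_common_coord_of_shared {m n k : ℕ} (p : Fin k → ℤ[X])
    (hp0 : ∀ i, (p i).eval 0 = 0) {M₀ N : ℤ} (hM₀ : M₀ ≠ 0) {Δ : ℤ → (Fin m → ℕ) × Fin n}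
    (hshared : ∀ x ∈ Set.Icc 1 N, ∀ y ∈ Set.Icc 1 N, x ≠ y → M₀ ∣ y - x →
      (Δ x).2 = (Δ y).2 → ∃ j j', (Δ x).1 j = (Δ y).1 j')
    (hN : ∃ a e, IsMonoConfig (insert (C M₀ * X) (Finset.univ.image fun i => (p i).comp (C M₀ * X)))
      (coincidenceColouring Δ M₀ N) N a e) :
    ∃ a d : ℤ, d ≠ 0 ∧ a ∈ Set.Icc 1 N ∧ (∀ i, a + (p i).eval d ∈ Set.Icc 1 N) ∧
      ∃ j, ∀ i, (Δ (a + (p i).eval d)).1 j = (Δ a).1 j := by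
  set χ := coincidenceColouring Δ M₀ N
  obtain ⟨a, e, ha, he, hcfg⟩ := hN
  set d := M₀ * e
  set r := refPoint Δ M₀ N a
  obtain ⟨hr, hrΔ, hra⟩ := refPoint_spec Δ M₀ N ha
  have hsame : ∀ z, χ z = χ a → M₀ ∣ z - a → (Δ z).2 = (Δ r).2 ∧ M₀ ∣ r - z ∧
      ∀ j j', (Δ z).1 j = (Δ r).1 j' ↔ (Δ a).1 j = (Δ r).1 j' := by
    intro z hz hza
    have hcol : (Δ z).2 = (Δ a).2 := congrArg Prod.fst hz
    have href : refPoint Δ M₀ N z = r := (refPoint_eq_of_dvd Δ M₀ N hcol.symm hza).symm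
    refine ⟨hcol.trans hrΔ.symm, by simpa using dvd_sub hra hza, fun j j' => Iff.of_eq ?_⟩
    have := congrFun (congrFun (congrArg Prod.snd hz) j) j'
    simpa only [χ, coincidenceColouring, href] using this
  have hd : d ≠ 0 := mul_ne_zero hM₀ (by rw [Set.mem_Icc] at he; omega)
  have hpi : ∀ i, a + (p i).eval d ∈ Set.Icc 1 N ∧ χ (a + (p i).eval d) = χ a := fun i => by
    simpa [eval_comp] using hcfg _ (Finset.mem_insert_of_mem (Finset.mem_image_of_mem _
      (Finset.mem_univ i)))
  have hb : a + d ∈ Set.Icc 1 N ∧ χ (a + d) = χ a := by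
    simpa using hcfg _ (Finset.mem_insert_self _ _)
  obtain ⟨j, j', hj⟩ : ∃ j j', (Δ a).1 j = (Δ r).1 j' := by
    by_cases h : a = r
    · obtain ⟨hbΔ, hbr, hbsame⟩ := hsame (a + d) hb.2 (by simp [d])
      obtain ⟨j, j', hj⟩ := hshared _ hb.1 r hr (by rw [← h]; simpa using hd) hbr hbΔ
      exact ⟨j, j', (hbsame j j').1 hj⟩
    · exact hshared a ha r hr h (by simpa using hra) hrΔ.symm
  refine ⟨a, d, hd, ha, fun i => (hpi i).1, j, fun i => ?_⟩
  have hdvd : M₀ ∣ (p i).eval d :=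
    (dvd_mul_right M₀ e).trans (by simpa [hp0 i] using sub_dvd_eval_sub d 0 (p i))
  obtain ⟨-, -, hzsame⟩ := hsame _ (hpi i).2 (by simpa using hdvd)
  exact ((hzsame j j').2 hj).trans hj.symm

/-- **Base case of the outer induction in Theorem 4.2** (`ℬ = {a₁ x}`).
Let `h, m, n, k ∈ ℕ`, `𝒜 = {p 1, ..., p k}` a set of integral polynomials and
`a₁` a nonzero integer.  Then there exists `N` such that for every
`(m, n)`-type colouring `Δ` of `{1, ..., N}` one of the following holds:
(i) there exist `a ∈ ℤ` and `d ≠ 0` with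
`{a, a + p 1 d, ..., a + p k d} ⊆ {1, ..., N}` monochromatic (some coordinate
`j ∈ {1, ..., m}` of `Δ` is constant on the set); or
(ii) there exist `a' ∈ ℤ` and `d' > h` with `{a', a' + a₁ * d'} ⊆ {1, ..., N}`
fully-rainbow (the two elements are distinct, all their first-`m` coordinate
colours are pairwise different, and the last coordinate `Δ_{m+1}` agrees on
both). -/
theorem base_case_outer_induction
    (h m n : ℕ) {k : ℕ}
    (p : Fin k → Polynomial ℤ) (hp0 : ∀ i, (p i).eval 0 = 0)
    (a₁ : ℤ) (ha₁ : a₁ ≠ 0) :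
    ∃ N : ℕ, ∀ Δ : ℤ → (Fin m → ℕ) × Fin n,
      (∃ a d : ℤ, d ≠ 0 ∧
        a ∈ Set.Icc (1 : ℤ) (N : ℤ) ∧
        (∀ i : Fin k, a + (p i).eval d ∈ Set.Icc (1 : ℤ) (N : ℤ)) ∧
        (∃ j : Fin m, ∀ i : Fin k, (Δ (a + (p i).eval d)).1 j = (Δ a).1 j)) ∨
      (∃ a' d' : ℤ, (h : ℤ) < d' ∧
        a' ∈ Set.Icc (1 : ℤ) (N : ℤ) ∧
        a' + a₁ * d' ∈ Set.Icc (1 : ℤ) (N : ℤ) ∧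
        a' + a₁ * d' ≠ a' ∧
        (∀ j j' : Fin m, (Δ (a' + a₁ * d')).1 j ≠ (Δ a').1 j') ∧
        (Δ (a' + a₁ * d')).2 = (Δ a').2) := by
  set M₀ : ℤ := a₁ * (h + 1)
  obtain ⟨N, hN⟩ := hasPolyVdW_of_forall_eval_zero
    (insert (C M₀ * X) (Finset.univ.image fun i => (p i).comp (C M₀ * X)))
    (by simp [eval_comp, hp0]) (Fin n × (Fin m → Fin m → Prop))
  refine ⟨N, fun Δ => ?_⟩
  by_cases hii : ∃ a' d' : ℤ, (h : ℤ) < d' ∧ a' ∈ Set.Icc 1 (N : ℤ) ∧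
      a' + a₁ * d' ∈ Set.Icc 1 (N : ℤ) ∧ IsFullyRainbow Δ a' (a' + a₁ * d')
  · exact .inr hii
  · exact .inl (exists_common_coord_of_shared p hp0 (mul_ne_zero ha₁ (by omega))
      (fun x hx y hy => exists_shared_coord_of_not_rainbow hii hx hy)
      (hN (coincidenceColouring Δ M₀ N)))
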